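/- Let (M;ρ) be a module over a Lie conformal algebra A, φ ∈ C²(A,M) a 2-cocycle, and T : M → A a φ-twisted relative Rota–Baxter operator. Then M becomes an NS-Lie conformal algebra under the λ-multiplications u∘_λ v = ρ(T(u))_λ v and u∨_λ v = φ_λ(T(u),T(v)) for u,v ∈ M. -/

import Mathlib

/- ------------------------------------------------------------------
Common definitions: λ-polynomials with coefficients in a ℂ[∂]-module,
Lie conformal algebras, modules, cochain complexes, the
Nijenhuis–Richardson bracket, bidegrees, lifts and twistings.
------------------------------------------------------------------- -/

open scoped Classical

noncomputable section

namespace LCAF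

/-- `MP k M` : `M`-valued polynomials in the `k` variables `λ₀, …, λ_{k-1}`,
encoded as finitely supported functions on multi-indices. -/
abbrev MP (k : ℕ) (M : Type*) [AddCommGroup M] : Type _ :=
  (Fin k →₀ ℕ) →₀ M

variable {A B M N A₁ A₂ : Type*}

section PolyOps

variable [AddCommGroup M] [Module ℂ M] [AddCommGroup N] [Module ℂ N]

/-- Apply a linear map to all coefficients of a polynomial. -/
def mapCoeff {k : ℕ} (g : M →ₗ[ℂ] N) (p : MP k M) : MP k N :=
  p.mapRange g (map_zero g)

/-- Multiplication by the monomial `λ^α`. -/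
def monMul {k : ℕ} (α : Fin k →₀ ℕ) (p : MP k M) : MP k M :=
  Finsupp.mapDomain (fun β => α + β) p

/-- The variable `λᵢ` as a scalar polynomial. -/
def Xv {k : ℕ} (i : Fin k) : MP k ℂ :=
  Finsupp.single (Finsupp.single i 1) (1 : ℂ)

/-- Multiplication of an `M`-valued polynomial by a scalar polynomial. -/
def scaleP {k : ℕ} (q : MP k ℂ) (p : MP k M) : MP k M :=
  q.sum fun α r => r • monMul α p

/-- The operator `q + c∂` acting on `M`-valued polynomials. -/
def opnd {k : ℕ} (D : M →ₗ[ℂ] M) (q : MP k ℂ) (c : ℂ) : MP k M → MP k M :=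
  fun p => scaleP q p + c • mapCoeff D p

/-- Substitution: in an `M`-valued polynomial in `k` variables, substitute the
`i`-th variable by the affine expression `q i + (c i)·∂` (with `∂ = D` acting on
coefficients), landing in polynomials in `k'` new variables. -/
def substFun {k k' : ℕ} (D : M →ₗ[ℂ] M) (q : Fin k → MP k' ℂ) (c : Fin k → ℂ)
    (p : MP k M) : MP k' M :=
  p.sum fun α m =>
    ((List.ofFn fun i : Fin k => (opnd D (q i) (c i))^[α i]).foldr (· ∘ ·) id)
      (Finsupp.single 0 m)

/-- Renaming of variables. -/
def renameV {k k' : ℕ} (h : Fin k → Fin k') (p : MP k M) : MP k' M :=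
  Finsupp.mapDomain (fun α => Finsupp.mapDomain h α) p

/-- The substitution `λ ↦ -λ-∂` in one variable. -/
def sub1 (D : M →ₗ[ℂ] M) (p : MP 1 M) : MP 1 M :=
  substFun D (fun _ => -(Xv 0)) (fun _ => -1) p

/-- The multi-index of the single variable `λ` in one variable. -/
def lam1 : Fin 1 →₀ ℕ := Finsupp.single 0 1

end PolyOps

section Binary

variable [AddCommGroup M] [Module ℂ M]

/-- `F` with its variable substituted by the expression `q + c ∂`, in two
variables `λ = λ₀`, `μ = λ₁`. -/
def opE (D : M →ₗ[ℂ] M) (F : A → B → MP 1 M) (q : MP 2 ℂ) (c : ℂ) (a : A) (b : B) :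
    MP 2 M :=
  substFun D (fun _ => q) (fun _ => c) (F a b)

/-- `F` applied with polynomial second argument (extended coefficientwise). -/
def opR [AddCommGroup B] [Module ℂ B] (D : M →ₗ[ℂ] M) (F : A → B → MP 1 M)
    (q : MP 2 ℂ) (c : ℂ) (a : A) (p : MP 2 B) : MP 2 M :=
  p.sum fun β x => monMul β (opE D F q c a x)

/-- `F` applied with polynomial first argument (extended coefficientwise). -/
def opL [AddCommGroup A] [Module ℂ A] (D : M →ₗ[ℂ] M) (F : A → B → MP 1 M)
    (q : MP 2 ℂ) (c : ℂ) (p : MP 2 A) (b : B) : MP 2 M :=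
  p.sum fun β x => monMul β (opE D F q c x b)

end Binary

section LCA

variable [AddCommGroup A] [Module ℂ A] [AddCommGroup M] [Module ℂ M]

/-- `(A, D, br)` is a Lie conformal algebra: `br a b` is `[a_λ b]`, an `A`-valued
polynomial in one variable `λ`. -/
structure IsLCA (D : A →ₗ[ℂ] A) (br : A → A → MP 1 A) : Prop where
  add_left : ∀ a b c : A, br (a + b) c = br a c + br b c
  smul_left : ∀ (r : ℂ) (a b : A), br (r • a) b = r • br a b
  add_right : ∀ a b c : A, br a (b + c) = br a b + br a c
  smul_right : ∀ (r : ℂ) (a b : A), br a (r • b) = r • br a b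
  sesq_left : ∀ a b : A, br (D a) b = -(monMul lam1 (br a b))
  sesq_right : ∀ a b : A, br a (D b) = monMul lam1 (br a b) + mapCoeff D (br a b)
  skew : ∀ a b : A, br a b = -(sub1 D (br b a))
  jacobi : ∀ a b c : A,
    opR D br (Xv 0) 0 a (renameV (fun _ => (1 : Fin 2)) (br b c)) =
      opL D br (Xv 0 + Xv 1) 0 (renameV (fun _ => (0 : Fin 2)) (br a b)) c +
        opR D br (Xv 1) 0 b (renameV (fun _ => (0 : Fin 2)) (br a c))

/-- `(M, DM, rho)` is a module over the Lie conformal algebra `(A, D, br)`. -/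
structure IsLCAMod (D : A →ₗ[ℂ] A) (br : A → A → MP 1 A)
    (DM : M →ₗ[ℂ] M) (rho : A → M → MP 1 M) : Prop where
  add_left : ∀ (a b : A) (m : M), rho (a + b) m = rho a m + rho b m
  smul_left : ∀ (r : ℂ) (a : A) (m : M), rho (r • a) m = r • rho a m
  add_right : ∀ (a : A) (m n : M), rho a (m + n) = rho a m + rho a n
  smul_right : ∀ (r : ℂ) (a : A) (m : M), rho a (r • m) = r • rho a m
  d_left : ∀ (a : A) (m : M), rho (D a) m = -(monMul lam1 (rho a m))
  d_right : ∀ (a : A) (m : M),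
    rho a (DM m) = monMul lam1 (rho a m) + mapCoeff DM (rho a m)
  comm : ∀ (a b : A) (m : M),
    opR DM rho (Xv 0) 0 a (renameV (fun _ => (1 : Fin 2)) (rho b m)) -
      opR DM rho (Xv 1) 0 b (renameV (fun _ => (0 : Fin 2)) (rho a m)) =
    opL DM rho (Xv 0 + Xv 1) 0 (renameV (fun _ => (0 : Fin 2)) (br a b)) m

/-- `phi` is a 2-cocycle of `(A, D, br)` with coefficients in the module
`(M, DM, rho)`. -/
structure IsTwoCocycle (D : A →ₗ[ℂ] A) (br : A → A → MP 1 A)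
    (DM : M →ₗ[ℂ] M) (rho : A → M → MP 1 M) (phi : A → A → MP 1 M) : Prop where
  add_left : ∀ (a b c : A), phi (a + b) c = phi a c + phi b c
  smul_left : ∀ (r : ℂ) (a b : A), phi (r • a) b = r • phi a b
  add_right : ∀ (a b c : A), phi a (b + c) = phi a b + phi a c
  smul_right : ∀ (r : ℂ) (a b : A), phi a (r • b) = r • phi a b
  sesq_left : ∀ a b : A, phi (D a) b = -(monMul lam1 (phi a b))
  sesq_right : ∀ a b : A, phi a (D b) = monMul lam1 (phi a b) + mapCoeff DM (phi a b)
  skew : ∀ a b : A, phi a b = -(sub1 DM (phi b a))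
  cocycle : ∀ a b c : A,
    opR DM rho (Xv 0) 0 a (renameV (fun _ => (1 : Fin 2)) (phi b c))
      - opR DM rho (Xv 1) 0 b (renameV (fun _ => (0 : Fin 2)) (phi a c))
      + opR DM rho (-(Xv 0) - Xv 1) (-1) c (renameV (fun _ => (0 : Fin 2)) (phi a b))
      + opR DM phi (Xv 0) 0 a (renameV (fun _ => (1 : Fin 2)) (br b c))
      - opR DM phi (Xv 1) 0 b (renameV (fun _ => (0 : Fin 2)) (br a c))
      - opL DM phi (Xv 0 + Xv 1) 0 (renameV (fun _ => (0 : Fin 2)) (br a b)) c = 0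

/-- `T : M → A` is a relative Rota–Baxter operator. -/
def IsRB (br : A → A → MP 1 A) (DM : M →ₗ[ℂ] M) (rho : A → M → MP 1 M)
    (T : M →ₗ[ℂ] A) : Prop :=
  ∀ m n : M, br (T m) (T n) = mapCoeff T (rho (T m) n - sub1 DM (rho (T n) m))

/-- `T : M → A` is a `φ`-twisted relative Rota–Baxter operator. -/
def IsTwistedRB (br : A → A → MP 1 A) (DM : M →ₗ[ℂ] M) (rho : A → M → MP 1 M)
    (phi : A → A → MP 1 M) (T : M →ₗ[ℂ] A) : Prop :=
  ∀ m n : M, br (T m) (T n) =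
    mapCoeff T (rho (T m) n - sub1 DM (rho (T n) m) + phi (T m) (T n))

/-- Combine an `A`-valued and an `M`-valued polynomial into an `A × M`-valued one. -/
def pairP {k : ℕ} (p : MP k A) (q : MP k M) : MP k (A × M) :=
  Finsupp.mapRange (fun a => (a, (0 : M))) rfl p +
    Finsupp.mapRange (fun m => ((0 : A), m)) rfl q

/-- The (φ-twisted) semidirect product λ-bracket on `A × M`. -/
def sdBr (br : A → A → MP 1 A) (DM : M →ₗ[ℂ] M) (rho : A → M → MP 1 M)
    (phi : A → A → MP 1 M) : A × M → A × M → MP 1 (A × M) :=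
  fun x y => pairP (br x.1 y.1) (rho x.1 y.2 - sub1 DM (rho y.1 x.2) + phi x.1 y.1)

end LCA

section NS

variable [AddCommGroup A] [Module ℂ A]

/-- The λ-bracket `[a_λ b] = a∘_λ b - b∘_{-λ-∂} a + a∨_λ b` attached to a pair of
λ-multiplications. -/
def lieNS (D : A →ₗ[ℂ] A) (o v : A → A → MP 1 A) : A → A → MP 1 A :=
  fun a b => o a b - sub1 D (o b a) + v a b

/-- `(A, ∘_λ, ∨_λ)` is an NS-Lie conformal algebra. -/
structure IsNSLie (D : A →ₗ[ℂ] A) (o v : A → A → MP 1 A) : Prop where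
  o_add_left : ∀ a b c : A, o (a + b) c = o a c + o b c
  o_smul_left : ∀ (r : ℂ) (a b : A), o (r • a) b = r • o a b
  o_add_right : ∀ a b c : A, o a (b + c) = o a b + o a c
  o_smul_right : ∀ (r : ℂ) (a b : A), o a (r • b) = r • o a b
  o_sesq_left : ∀ a b : A, o (D a) b = -(monMul lam1 (o a b))
  o_sesq_right : ∀ a b : A, o a (D b) = monMul lam1 (o a b) + mapCoeff D (o a b)
  v_add_left : ∀ a b c : A, v (a + b) c = v a c + v b c
  v_smul_left : ∀ (r : ℂ) (a b : A), v (r • a) b = r • v a b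
  v_add_right : ∀ a b c : A, v a (b + c) = v a b + v a c
  v_smul_right : ∀ (r : ℂ) (a b : A), v a (r • b) = r • v a b
  v_sesq_left : ∀ a b : A, v (D a) b = -(monMul lam1 (v a b))
  v_sesq_right : ∀ a b : A, v a (D b) = monMul lam1 (v a b) + mapCoeff D (v a b)
  v_skew : ∀ a b : A, v a b = -(sub1 D (v b a))
  ns1 : ∀ a b c : A,
    opL D o (Xv 0 + Xv 1) 0 (renameV (fun _ => (0 : Fin 2)) (o a b)) c
      - opR D o (Xv 0) 0 a (renameV (fun _ => (1 : Fin 2)) (o b c))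
      - opL D o (Xv 0 + Xv 1) 0 (renameV (fun _ => (1 : Fin 2)) (o b a)) c
      + opR D o (Xv 1) 0 b (renameV (fun _ => (0 : Fin 2)) (o a c))
      + opL D o (Xv 0 + Xv 1) 0 (renameV (fun _ => (0 : Fin 2)) (v a b)) c = 0
  ns2 : ∀ a b c : A,
    opR D v (Xv 0) 0 a (renameV (fun _ => (1 : Fin 2)) (lieNS D o v b c))
      - opL D v (Xv 0 + Xv 1) 0 (renameV (fun _ => (0 : Fin 2)) (lieNS D o v a b)) c
      - opR D v (Xv 1) 0 b (renameV (fun _ => (0 : Fin 2)) (lieNS D o v a c))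
      + opR D o (Xv 0) 0 a (renameV (fun _ => (1 : Fin 2)) (v b c))
      - opR D o (Xv 1) 0 b (renameV (fun _ => (0 : Fin 2)) (v a c))
      + opR D o (-(Xv 0) - Xv 1) (-1) c (renameV (fun _ => (0 : Fin 2)) (v a b)) = 0

/-- `(A, ≻_λ, ≺_λ, ⋎_λ)` is a conformal NS-algebra. -/
structure IsConfNS (D : A →ₗ[ℂ] A) (su pr cu : A → A → MP 1 A) : Prop where
  su_add_left : ∀ a b c : A, su (a + b) c = su a c + su b c
  su_smul_left : ∀ (r : ℂ) (a b : A), su (r • a) b = r • su a b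
  su_add_right : ∀ a b c : A, su a (b + c) = su a b + su a c
  su_smul_right : ∀ (r : ℂ) (a b : A), su a (r • b) = r • su a b
  su_sesq_left : ∀ a b : A, su (D a) b = -(monMul lam1 (su a b))
  su_sesq_right : ∀ a b : A, su a (D b) = monMul lam1 (su a b) + mapCoeff D (su a b)
  pr_add_left : ∀ a b c : A, pr (a + b) c = pr a c + pr b c
  pr_smul_left : ∀ (r : ℂ) (a b : A), pr (r • a) b = r • pr a b
  pr_add_right : ∀ a b c : A, pr a (b + c) = pr a b + pr a c
  pr_smul_right : ∀ (r : ℂ) (a b : A), pr a (r • b) = r • pr a b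
  pr_sesq_left : ∀ a b : A, pr (D a) b = -(monMul lam1 (pr a b))
  pr_sesq_right : ∀ a b : A, pr a (D b) = monMul lam1 (pr a b) + mapCoeff D (pr a b)
  cu_add_left : ∀ a b c : A, cu (a + b) c = cu a c + cu b c
  cu_smul_left : ∀ (r : ℂ) (a b : A), cu (r • a) b = r • cu a b
  cu_add_right : ∀ a b c : A, cu a (b + c) = cu a b + cu a c
  cu_smul_right : ∀ (r : ℂ) (a b : A), cu a (r • b) = r • cu a b
  cu_sesq_left : ∀ a b : A, cu (D a) b = -(monMul lam1 (cu a b))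
  cu_sesq_right : ∀ a b : A, cu a (D b) = monMul lam1 (cu a b) + mapCoeff D (cu a b)
  ax1 : ∀ x y z : A,
    opR D su (Xv 0) 0 x (renameV (fun _ => (1 : Fin 2)) (su y z)) =
      opL D su (Xv 0 + Xv 1) 0
        (renameV (fun _ => (0 : Fin 2)) (su x y + pr x y + cu x y)) z
  ax2 : ∀ x y z : A,
    opR D pr (Xv 0) 0 x (renameV (fun _ => (1 : Fin 2)) (su y z + pr y z + cu y z)) =
      opL D pr (Xv 0 + Xv 1) 0 (renameV (fun _ => (0 : Fin 2)) (pr x y)) z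
  ax3 : ∀ x y z : A,
    opR D su (Xv 0) 0 x (renameV (fun _ => (1 : Fin 2)) (pr y z)) =
      opL D pr (Xv 0 + Xv 1) 0 (renameV (fun _ => (0 : Fin 2)) (su x y)) z
  ax4 : ∀ x y z : A,
    opR D su (Xv 0) 0 x (renameV (fun _ => (1 : Fin 2)) (cu y z)) -
        opL D cu (Xv 0 + Xv 1) 0
          (renameV (fun _ => (0 : Fin 2)) (su x y + pr x y + cu x y)) z =
      opL D pr (Xv 0 + Xv 1) 0 (renameV (fun _ => (0 : Fin 2)) (cu x y)) z -
        opR D cu (Xv 0) 0 x (renameV (fun _ => (1 : Fin 2)) (su y z + pr y z + cu y z))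

/-- `N` is a Nijenhuis operator on the Lie conformal algebra `(A, D, br)`. -/
def IsNijenhuis (D : A →ₗ[ℂ] A) (br : A → A → MP 1 A) (N : A →ₗ[ℂ] A) : Prop :=
  (∀ a : A, N (D a) = D (N a)) ∧
  ∀ a b : A, br (N a) (N b) =
    mapCoeff N (br (N a) b + br a (N b) - mapCoeff N (br a b))

/-- The deformed bracket `[a_λ b]_N`. -/
def deformBr (br : A → A → MP 1 A) (N : A →ₗ[ℂ] A) : A → A → MP 1 A :=
  fun a b => br (N a) b + br a (N b) - mapCoeff N (br a b)

end NS

/- ------------------------  cochains  ------------------------ -/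

/-- `RawC n A M` : the underlying maps of cochains in `C^{n+1}(A, M)`:
`n+1` arguments from `A`, values in `M`-valued polynomials in `n` variables. -/
abbrev RawC (n : ℕ) (A : Type*) (M : Type*) [AddCommGroup M] : Type _ :=
  (Fin (n + 1) → A) → MP n M

section CochainDefs

variable [AddCommGroup A] [Module ℂ A] [AddCommGroup M] [Module ℂ M]

/-- The scalar-polynomial part of the expression for `λ_t`, where the last
variable is replaced by `λ† = -λ₀ - ⋯ - λ_{N-1} - ∂`. -/
def exprQ {N : ℕ} (t : Fin (N + 1)) : MP N ℂ :=
  if h : t = Fin.last N then -(∑ i : Fin N, Xv i) else Xv (t.castPred h)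

/-- The `∂`-coefficient of the expression for `λ_t`. -/
def exprC {N : ℕ} (t : Fin (N + 1)) : ℂ :=
  if t = Fin.last N then -1 else 0

/-- `f` is a cochain in `C^{n+1}(A, M)` (conformal sesquilinearity, multilinearity,
and skew-symmetry with the substitution `λ_{last} ↦ λ†`). -/
structure IsCochain {n : ℕ} (DA : A →ₗ[ℂ] A) (DM : M →ₗ[ℂ] M) (f : RawC n A M) :
    Prop where
  map_add : ∀ (a : Fin (n + 1) → A) (i : Fin (n + 1)) (x y : A),
    f (Function.update a i (x + y)) =
      f (Function.update a i x) + f (Function.update a i y)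
  map_smul : ∀ (a : Fin (n + 1) → A) (i : Fin (n + 1)) (r : ℂ) (x : A),
    f (Function.update a i (r • x)) = r • f (Function.update a i x)
  sesq : ∀ (a : Fin (n + 1) → A) (i : Fin n),
    f (Function.update a i.castSucc (DA (a i.castSucc))) =
      -(monMul (Finsupp.single i 1) (f a))
  sesq_last : ∀ a : Fin (n + 1) → A,
    f (Function.update a (Fin.last n) (DA (a (Fin.last n)))) =
      (∑ i : Fin n, monMul (Finsupp.single i 1) (f a)) + mapCoeff DM (f a)
  skew : ∀ (σ : Equiv.Perm (Fin (n + 1))) (a : Fin (n + 1) → A),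
    f a = ((Equiv.Perm.sign σ : ℤˣ) : ℤ) •
      substFun DM (fun j : Fin n => exprQ (σ j.castSucc))
        (fun j : Fin n => exprC (σ j.castSucc)) (f (a ∘ σ))

/-- `(t, N-t)`-unshuffles : permutations strictly increasing on the first `t`
positions and on the remaining positions. -/
def IsUnsh {N : ℕ} (t : ℕ) (σ : Equiv.Perm (Fin N)) : Prop :=
  ∀ i j : Fin N, i < j → (j.val < t ∨ t ≤ i.val) → σ i < σ j

/-- The `⋄`-product (unshuffle-sum insertion) of cochains:
`f ∈ C^{p+1}(A,A)`, `g ∈ C^{q+1}(A,A)`, `f⋄g ∈ C^{p+q+1}(A,A)`. -/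
def diamond {p q : ℕ} (DA : A →ₗ[ℂ] A) (f : RawC p A A) (g : RawC q A A) :
    RawC (p + q) A A := fun a =>
  ∑ σ ∈ Finset.univ.filter (fun σ : Equiv.Perm (Fin (p + q + 1)) => IsUnsh (q + 1) σ),
    ((Equiv.Perm.sign σ : ℤˣ) : ℤ) •
      substFun DA
        (fun v : Fin (p + q) =>
          if v.val = q then
            ∑ i : Fin (q + 1), exprQ (σ (Fin.castLE (by omega) i))
          else exprQ (σ v.castSucc))
        (fun v : Fin (p + q) =>
          if v.val = q then
            ∑ i : Fin (q + 1), exprC (σ (Fin.castLE (by omega) i))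
          else exprC (σ v.castSucc))
        ((g fun i : Fin (q + 1) => a (σ (Fin.castLE (by omega) i))).sum fun β x =>
          monMul
            (Finsupp.mapDomain
              (fun i : Fin q => (Fin.cast (by omega) (Fin.castAdd p i) : Fin (p + q))) β)
            (renameV (fun j : Fin p => (Fin.cast (by omega) (Fin.natAdd q j) : Fin (p + q)))
              (f (Fin.cons x fun j : Fin p =>
                a (σ (Fin.cast (by omega) (Fin.natAdd (q + 1) j)))))))

/-- Transport a raw cochain along an equality of degrees. -/
def castRaw {m n : ℕ} (h : m = n) (f : RawC m A M) : RawC n A M := h ▸ f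

/-- The Nijenhuis–Richardson bracket `[f,g] = f⋄g - (-1)^{pq} g⋄f`. -/
def nr {p q : ℕ} (DA : A →ₗ[ℂ] A) (f : RawC p A A) (g : RawC q A A) :
    RawC (p + q) A A :=
  diamond DA f g - ((-1 : ℤ)) ^ (p * q) • castRaw (Nat.add_comm q p) (diamond DA g f)

end CochainDefs

section Bidegree

variable [AddCommGroup A₁] [Module ℂ A₁] [AddCommGroup A₂] [Module ℂ A₂]

/-- `x` is a pure element: in `A₁` (if `b`) or in `A₂` (if `¬b`). -/
def IsPure (x : A₁ × A₂) (b : Bool) : Prop :=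
  if b then x.2 = 0 else x.1 = 0

/-- `f ∈ C^{n+1}(A₁⊕A₂, A₁⊕A₂)` has bidegree `k|l`. -/
def HasBidegree {n : ℕ} (f : RawC n (A₁ × A₂) (A₁ × A₂)) (k l : ℤ) : Prop :=
  k + l = (n : ℤ) ∧
  ∀ (P : Fin (n + 1) → Bool) (a : Fin (n + 1) → A₁ × A₂),
    (∀ i, IsPure (a i) (P i)) →
    ((((Finset.univ.filter fun i => P i = true).card : ℤ) = k + 1 →
        ∀ β, ((f a) β).2 = 0) ∧
      ((((Finset.univ.filter fun i => P i = true).card : ℤ) = k) →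
        ∀ β, ((f a) β).1 = 0) ∧
      (((((Finset.univ.filter fun i => P i = true).card : ℤ) ≠ k + 1) ∧
        (((Finset.univ.filter fun i => P i = true).card : ℤ) ≠ k)) → f a = 0))

/-- The lift of `f ∈ C^{n+1}(A₂, A₁)` to a cochain on `A₁ ⊕ A₂`. -/
def liftC {n : ℕ} (f : RawC n A₂ A₁) : RawC n (A₁ × A₂) (A₁ × A₂) :=
  fun x => Finsupp.mapRange (fun a => (a, (0 : A₂))) rfl (f fun i => (x i).2)

/-- Recover `f ∈ C^{n+1}(A₂, A₁)` from (a lift of) a cochain on `A₁ ⊕ A₂`. -/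
def downC {n : ℕ} (g : RawC n (A₁ × A₂) (A₁ × A₂)) : RawC n A₂ A₁ :=
  fun v => Finsupp.mapRange Prod.fst rfl (g fun i => ((0 : A₁), v i))

/-- The lift of a `ℂ[∂]`-module homomorphism `H : A₂ → A₁` as a `1`-cochain on
`A₁ ⊕ A₂`. -/
def hatHom (H : A₂ →ₗ[ℂ] A₁) : RawC 0 (A₁ × A₂) (A₁ × A₂) :=
  fun x => Finsupp.single 0 (H ((x 0).2), (0 : A₂))

/-- `H : A₂ → A₁` viewed as an element of `C^1(A₂, A₁)`. -/
def hatC1 (H : A₂ →ₗ[ℂ] A₁) : RawC 0 A₂ A₁ :=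
  fun v => Finsupp.single 0 (H (v 0))

/-- The structure map of a λ-bracket as a 2-cochain. -/
def toC2 {A : Type*} [AddCommGroup A] (br : A → A → MP 1 A) : RawC 1 A A :=
  fun a => br (a 0) (a 1)

/-- `l₁ = d_{μ̂₂}` on `C^*(A₂, A₁)`. -/
def ell1 (DA : (A₁ × A₂) →ₗ[ℂ] (A₁ × A₂)) (mu2 : RawC 1 (A₁ × A₂) (A₁ × A₂))
    {n : ℕ} (f : RawC n A₂ A₁) : RawC (n + 1) A₂ A₁ :=
  downC (castRaw (show 1 + n = n + 1 by omega) (nr DA mu2 (liftC f)))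

/-- `l₂ = [·,·]_{μ̂₁}` on `C^*(A₂, A₁)`. -/
def ell2 (DA : (A₁ × A₂) →ₗ[ℂ] (A₁ × A₂)) (mu1 : RawC 1 (A₁ × A₂) (A₁ × A₂))
    {m n : ℕ} (f : RawC m A₂ A₁) (g : RawC n A₂ A₁) : RawC (m + n + 1) A₂ A₁ :=
  ((-1 : ℤ)) ^ m •
    downC (castRaw (show 1 + m + n = m + n + 1 by omega)
      (nr DA (nr DA mu1 (liftC f)) (liftC g)))

/-- `l₃ = [·,·,·]_{φ̂₁}` on `C^*(A₂, A₁)`. -/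
def ell3 (DA : (A₁ × A₂) →ₗ[ℂ] (A₁ × A₂)) (phi1 : RawC 1 (A₁ × A₂) (A₁ × A₂))
    {m n k : ℕ} (f : RawC m A₂ A₁) (g : RawC n A₂ A₁) (h : RawC k A₂ A₁) :
    RawC (m + n + k + 1) A₂ A₁ :=
  ((-1 : ℤ)) ^ n •
    downC (castRaw (show 1 + m + n + k = m + n + k + 1 by omega)
      (nr DA (nr DA (nr DA phi1 (liftC f)) (liftC g)) (liftC h)))

/-- `Π` is a twilled Lie conformal algebra structure on `A₁ ⊕ A₂`. -/
def IsTwilledStr (DA : (A₁ × A₂) →ₗ[ℂ] (A₁ × A₂))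
    (Pi : RawC 1 (A₁ × A₂) (A₁ × A₂)) : Prop :=
  IsCochain DA DA Pi ∧ nr DA Pi Pi = 0 ∧
    ∃ m1 m2 : RawC 1 (A₁ × A₂) (A₁ × A₂),
      HasBidegree m1 1 0 ∧ HasBidegree m2 0 1 ∧ Pi = m1 + m2

/-- `Π` is a quasi-twilled Lie conformal algebra structure on `A₁ ⊕ A₂`. -/
def IsQuasiTwilledStr (DA : (A₁ × A₂) →ₗ[ℂ] (A₁ × A₂))
    (Pi : RawC 1 (A₁ × A₂) (A₁ × A₂)) : Prop :=
  IsCochain DA DA Pi ∧ nr DA Pi Pi = 0 ∧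
    ∃ p1 m1 m2 : RawC 1 (A₁ × A₂) (A₁ × A₂),
      HasBidegree p1 2 (-1) ∧ HasBidegree m1 1 0 ∧ HasBidegree m2 0 1 ∧
        Pi = p1 + m1 + m2

end Bidegree

section Twist

variable [AddCommGroup A] [Module ℂ A]

/-- The twisting `Π^H = e^{X_Ĥ}(Π)` of a `2`-cochain by (the lift of) a
`ℂ[∂]`-module homomorphism. -/
def twist (DA : A →ₗ[ℂ] A) (Pi : RawC 1 A A) (hH : RawC 0 A A) : RawC 1 A A :=
  Pi + nr DA Pi hH + (2 : ℂ)⁻¹ • nr DA (nr DA Pi hH) hH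
    + (6 : ℂ)⁻¹ • nr DA (nr DA (nr DA Pi hH) hH) hH

end Twist

end LCAF

namespace LCAF

section GradedStructures

variable {A₁ A₂ : Type*} [AddCommGroup A₁] [Module ℂ A₁] [AddCommGroup A₂] [Module ℂ A₂]

/-- The subspace of `⊕ₙ RawC n A₂ A₁` cut out by `P` (placing `RawC n` in degree
`n+1`), equipped with `d` and `br`, is a differential graded Lie algebra. -/
structure IsDGLAOn
    (P : ∀ {n : ℕ}, RawC n A₂ A₁ → Prop)
    (d : ∀ {n : ℕ}, RawC n A₂ A₁ → RawC (n + 1) A₂ A₁)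
    (br : ∀ {m n : ℕ}, RawC m A₂ A₁ → RawC n A₂ A₁ → RawC (m + n + 1) A₂ A₁) :
    Prop where
  mem_zero : ∀ {n : ℕ}, P (0 : RawC n A₂ A₁)
  mem_add : ∀ {n : ℕ} (f g : RawC n A₂ A₁), P f → P g → P (f + g)
  mem_smul : ∀ {n : ℕ} (r : ℂ) (f : RawC n A₂ A₁), P f → P (r • f)
  mem_d : ∀ {n : ℕ} (f : RawC n A₂ A₁), P f → P (d f)
  mem_br : ∀ {m n : ℕ} (f : RawC m A₂ A₁) (g : RawC n A₂ A₁), P f → P g → P (br f g)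
  d_add : ∀ {n : ℕ} (f g : RawC n A₂ A₁), P f → P g → d (f + g) = d f + d g
  d_smul : ∀ {n : ℕ} (r : ℂ) (f : RawC n A₂ A₁), P f → d (r • f) = r • d f
  br_add_left : ∀ {m n : ℕ} (f f' : RawC m A₂ A₁) (g : RawC n A₂ A₁),
    P f → P f' → P g → br (f + f') g = br f g + br f' g
  br_smul_left : ∀ {m n : ℕ} (r : ℂ) (f : RawC m A₂ A₁) (g : RawC n A₂ A₁),
    P f → P g → br (r • f) g = r • br f g
  br_add_right : ∀ {m n : ℕ} (f : RawC m A₂ A₁) (g g' : RawC n A₂ A₁),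
    P f → P g → P g' → br f (g + g') = br f g + br f g'
  br_smul_right : ∀ {m n : ℕ} (r : ℂ) (f : RawC m A₂ A₁) (g : RawC n A₂ A₁),
    P f → P g → br f (r • g) = r • br f g
  d_squared : ∀ {n : ℕ} (f : RawC n A₂ A₁), P f → d (d f) = 0
  skew : ∀ {m n : ℕ} (f : RawC m A₂ A₁) (g : RawC n A₂ A₁), P f → P g →
    br f g = ((-1 : ℤ)) ^ ((m + 1) * (n + 1) + 1) •
      castRaw (show n + m + 1 = m + n + 1 by omega) (br g f)
  leibniz : ∀ {m n : ℕ} (f : RawC m A₂ A₁) (g : RawC n A₂ A₁), P f → P g →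
    castRaw (show m + n + 1 + 1 = m + n + 2 by omega) (d (br f g)) =
      castRaw (show m + 1 + n + 1 = m + n + 2 by omega) (br (d f) g) +
      ((-1 : ℤ)) ^ (m + 1) •
        castRaw (show m + (n + 1) + 1 = m + n + 2 by omega) (br f (d g))
  jacobi : ∀ {m n k : ℕ} (f : RawC m A₂ A₁) (g : RawC n A₂ A₁) (h : RawC k A₂ A₁),
    P f → P g → P h →
    castRaw (show m + (n + k + 1) + 1 = m + n + k + 2 by omega) (br f (br g h)) =
      castRaw (show m + n + 1 + k + 1 = m + n + k + 2 by omega) (br (br f g) h) +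
      ((-1 : ℤ)) ^ ((m + 1) * (n + 1)) •
        castRaw (show n + (m + k + 1) + 1 = m + n + k + 2 by omega) (br g (br f h))

/-- The subspace of `⊕ₙ RawC n A₂ A₁` cut out by `P` (placing `RawC n` in degree
`n+1`), with operations `l₁, l₂, l₃` (and `lᵢ = 0` for `i ≥ 4`), is an
`L∞`-algebra: graded skew-symmetry and the higher Jacobi identities
`∑_{i+j=n+1} (-1)^i ∑_{σ ∈ Sh(i,n-i)} χ(σ) l_j(l_i(x_{σ(1)},…),…) = 0`
(only `n = 1, …, 5` are nontrivial since `lᵢ = 0` for `i ≥ 4`). -/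
structure IsLInftyOn
    (P : ∀ {n : ℕ}, RawC n A₂ A₁ → Prop)
    (l1 : ∀ {n : ℕ}, RawC n A₂ A₁ → RawC (n + 1) A₂ A₁)
    (l2 : ∀ {m n : ℕ}, RawC m A₂ A₁ → RawC n A₂ A₁ → RawC (m + n + 1) A₂ A₁)
    (l3 : ∀ {m n k : ℕ}, RawC m A₂ A₁ → RawC n A₂ A₁ → RawC k A₂ A₁ →
      RawC (m + n + k + 1) A₂ A₁) : Prop where
  mem_zero : ∀ {n : ℕ}, P (0 : RawC n A₂ A₁)
  mem_add : ∀ {n : ℕ} (f g : RawC n A₂ A₁), P f → P g → P (f + g)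
  mem_smul : ∀ {n : ℕ} (r : ℂ) (f : RawC n A₂ A₁), P f → P (r • f)
  mem_l1 : ∀ {n : ℕ} (f : RawC n A₂ A₁), P f → P (l1 f)
  mem_l2 : ∀ {m n : ℕ} (f : RawC m A₂ A₁) (g : RawC n A₂ A₁), P f → P g → P (l2 f g)
  mem_l3 : ∀ {m n k : ℕ} (f : RawC m A₂ A₁) (g : RawC n A₂ A₁) (h : RawC k A₂ A₁),
    P f → P g → P h → P (l3 f g h)
  l1_add : ∀ {n : ℕ} (f g : RawC n A₂ A₁), P f → P g → l1 (f + g) = l1 f + l1 g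
  l1_smul : ∀ {n : ℕ} (r : ℂ) (f : RawC n A₂ A₁), P f → l1 (r • f) = r • l1 f
  l2_add_left : ∀ {m n : ℕ} (f f' : RawC m A₂ A₁) (g : RawC n A₂ A₁),
    P f → P f' → P g → l2 (f + f') g = l2 f g + l2 f' g
  l2_smul_left : ∀ {m n : ℕ} (r : ℂ) (f : RawC m A₂ A₁) (g : RawC n A₂ A₁),
    P f → P g → l2 (r • f) g = r • l2 f g
  l2_add_right : ∀ {m n : ℕ} (f : RawC m A₂ A₁) (g g' : RawC n A₂ A₁),
    P f → P g → P g' → l2 f (g + g') = l2 f g + l2 f g'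
  l2_smul_right : ∀ {m n : ℕ} (r : ℂ) (f : RawC m A₂ A₁) (g : RawC n A₂ A₁),
    P f → P g → l2 f (r • g) = r • l2 f g
  l3_add₁ : ∀ {m n k : ℕ} (f f' : RawC m A₂ A₁) (g : RawC n A₂ A₁) (h : RawC k A₂ A₁),
    P f → P f' → P g → P h → l3 (f + f') g h = l3 f g h + l3 f' g h
  l3_smul₁ : ∀ {m n k : ℕ} (r : ℂ) (f : RawC m A₂ A₁) (g : RawC n A₂ A₁)
    (h : RawC k A₂ A₁), P f → P g → P h → l3 (r • f) g h = r • l3 f g h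
  l3_add₂ : ∀ {m n k : ℕ} (f : RawC m A₂ A₁) (g g' : RawC n A₂ A₁) (h : RawC k A₂ A₁),
    P f → P g → P g' → P h → l3 f (g + g') h = l3 f g h + l3 f g' h
  l3_smul₂ : ∀ {m n k : ℕ} (r : ℂ) (f : RawC m A₂ A₁) (g : RawC n A₂ A₁)
    (h : RawC k A₂ A₁), P f → P g → P h → l3 f (r • g) h = r • l3 f g h
  l3_add₃ : ∀ {m n k : ℕ} (f : RawC m A₂ A₁) (g : RawC n A₂ A₁) (h h' : RawC k A₂ A₁),
    P f → P g → P h → P h' → l3 f g (h + h') = l3 f g h + l3 f g h'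
  l3_smul₃ : ∀ {m n k : ℕ} (r : ℂ) (f : RawC m A₂ A₁) (g : RawC n A₂ A₁)
    (h : RawC k A₂ A₁), P f → P g → P h → l3 f g (r • h) = r • l3 f g h
  skew2 : ∀ {m n : ℕ} (f : RawC m A₂ A₁) (g : RawC n A₂ A₁), P f → P g →
    l2 f g = ((-1 : ℤ)) ^ ((m + 1) * (n + 1) + 1) •
      castRaw (show n + m + 1 = m + n + 1 by omega) (l2 g f)
  skew3a : ∀ {m n k : ℕ} (f : RawC m A₂ A₁) (g : RawC n A₂ A₁) (h : RawC k A₂ A₁),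
    P f → P g → P h →
    l3 f g h = ((-1 : ℤ)) ^ ((m + 1) * (n + 1) + 1) •
      castRaw (show n + m + k + 1 = m + n + k + 1 by omega) (l3 g f h)
  skew3b : ∀ {m n k : ℕ} (f : RawC m A₂ A₁) (g : RawC n A₂ A₁) (h : RawC k A₂ A₁),
    P f → P g → P h →
    l3 f g h = ((-1 : ℤ)) ^ ((n + 1) * (k + 1) + 1) •
      castRaw (show m + k + n + 1 = m + n + k + 1 by omega) (l3 f h g)
  jac1 : ∀ {n : ℕ} (f : RawC n A₂ A₁), P f → l1 (l1 f) = 0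
  jac2 : ∀ {m n : ℕ} (f : RawC m A₂ A₁) (g : RawC n A₂ A₁), P f → P g →
    castRaw (show m + n + 1 + 1 = m + n + 2 by omega) (l1 (l2 f g))
      - castRaw (show m + 1 + n + 1 = m + n + 2 by omega) (l2 (l1 f) g)
      + ((-1 : ℤ)) ^ ((m + 1) * (n + 1)) •
          castRaw (show n + 1 + m + 1 = m + n + 2 by omega) (l2 (l1 g) f)
      = 0
  jac3 : ∀ {m n k : ℕ} (f : RawC m A₂ A₁) (g : RawC n A₂ A₁) (h : RawC k A₂ A₁),
    P f → P g → P h →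
    -(castRaw (show m + 1 + n + k + 1 = m + n + k + 2 by omega) (l3 (l1 f) g h))
      + ((-1 : ℤ)) ^ ((m + 1) * (n + 1)) •
          castRaw (show n + 1 + m + k + 1 = m + n + k + 2 by omega) (l3 (l1 g) f h)
      - ((-1 : ℤ)) ^ ((k + 1) * ((m + 1) + (n + 1))) •
          castRaw (show k + 1 + m + n + 1 = m + n + k + 2 by omega) (l3 (l1 h) f g)
      + castRaw (show m + n + 1 + k + 1 = m + n + k + 2 by omega) (l2 (l2 f g) h)
      - ((-1 : ℤ)) ^ ((n + 1) * (k + 1)) •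
          castRaw (show m + k + 1 + n + 1 = m + n + k + 2 by omega) (l2 (l2 f h) g)
      + ((-1 : ℤ)) ^ ((m + 1) * ((n + 1) + (k + 1))) •
          castRaw (show n + k + 1 + m + 1 = m + n + k + 2 by omega) (l2 (l2 g h) f)
      - castRaw (show m + n + k + 1 + 1 = m + n + k + 2 by omega) (l1 (l3 f g h))
      = 0
  jac4 : ∀ {m n k l : ℕ} (f : RawC m A₂ A₁) (g : RawC n A₂ A₁) (h : RawC k A₂ A₁)
    (e : RawC l A₂ A₁), P f → P g → P h → P e →
    castRaw (show m + n + 1 + k + l + 1 = m + n + k + l + 2 by omega) (l3 (l2 f g) h e)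
      - ((-1 : ℤ)) ^ ((n + 1) * (k + 1)) •
          castRaw (show m + k + 1 + n + l + 1 = m + n + k + l + 2 by omega)
            (l3 (l2 f h) g e)
      + ((-1 : ℤ)) ^ ((l + 1) * ((n + 1) + (k + 1))) •
          castRaw (show m + l + 1 + n + k + 1 = m + n + k + l + 2 by omega)
            (l3 (l2 f e) g h)
      + ((-1 : ℤ)) ^ ((m + 1) * ((n + 1) + (k + 1))) •
          castRaw (show n + k + 1 + m + l + 1 = m + n + k + l + 2 by omega)
            (l3 (l2 g h) f e)
      - ((-1 : ℤ)) ^ ((m + 1) * (n + 1) + (m + 1) * (l + 1) + (k + 1) * (l + 1)) •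
          castRaw (show n + l + 1 + m + k + 1 = m + n + k + l + 2 by omega)
            (l3 (l2 g e) f h)
      + ((-1 : ℤ)) ^ (((m + 1) + (n + 1)) * ((k + 1) + (l + 1))) •
          castRaw (show k + l + 1 + m + n + 1 = m + n + k + l + 2 by omega)
            (l3 (l2 h e) f g)
      - castRaw (show m + n + k + 1 + l + 1 = m + n + k + l + 2 by omega)
          (l2 (l3 f g h) e)
      + ((-1 : ℤ)) ^ ((k + 1) * (l + 1)) •
          castRaw (show m + n + l + 1 + k + 1 = m + n + k + l + 2 by omega)
            (l2 (l3 f g e) h)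
      - ((-1 : ℤ)) ^ ((n + 1) * ((k + 1) + (l + 1))) •
          castRaw (show m + k + l + 1 + n + 1 = m + n + k + l + 2 by omega)
            (l2 (l3 f h e) g)
      + ((-1 : ℤ)) ^ ((m + 1) * ((n + 1) + (k + 1) + (l + 1))) •
          castRaw (show n + k + l + 1 + m + 1 = m + n + k + l + 2 by omega)
            (l2 (l3 g h e) f)
      = 0
  jac5 : ∀ {a b c d e : ℕ} (x1 : RawC a A₂ A₁) (x2 : RawC b A₂ A₁) (x3 : RawC c A₂ A₁)
    (x4 : RawC d A₂ A₁) (x5 : RawC e A₂ A₁), P x1 → P x2 → P x3 → P x4 → P x5 →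
    castRaw (show a + b + c + 1 + d + e + 1 = a + b + c + d + e + 2 by omega)
        (l3 (l3 x1 x2 x3) x4 x5)
      - ((-1 : ℤ)) ^ ((c + 1) * (d + 1)) •
          castRaw (show a + b + d + 1 + c + e + 1 = a + b + c + d + e + 2 by omega)
            (l3 (l3 x1 x2 x4) x3 x5)
      + ((-1 : ℤ)) ^ ((e + 1) * ((c + 1) + (d + 1))) •
          castRaw (show a + b + e + 1 + c + d + 1 = a + b + c + d + e + 2 by omega)
            (l3 (l3 x1 x2 x5) x3 x4)
      + ((-1 : ℤ)) ^ ((b + 1) * ((c + 1) + (d + 1))) •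
          castRaw (show a + c + d + 1 + b + e + 1 = a + b + c + d + e + 2 by omega)
            (l3 (l3 x1 x3 x4) x2 x5)
      - ((-1 : ℤ)) ^ ((b + 1) * (c + 1) + (b + 1) * (e + 1) + (d + 1) * (e + 1)) •
          castRaw (show a + c + e + 1 + b + d + 1 = a + b + c + d + e + 2 by omega)
            (l3 (l3 x1 x3 x5) x2 x4)
      + ((-1 : ℤ)) ^ (((b + 1) + (c + 1)) * ((d + 1) + (e + 1))) •
          castRaw (show a + d + e + 1 + b + c + 1 = a + b + c + d + e + 2 by omega)
            (l3 (l3 x1 x4 x5) x2 x3)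
      - ((-1 : ℤ)) ^ ((a + 1) * ((b + 1) + (c + 1) + (d + 1))) •
          castRaw (show b + c + d + 1 + a + e + 1 = a + b + c + d + e + 2 by omega)
            (l3 (l3 x2 x3 x4) x1 x5)
      + ((-1 : ℤ)) ^ ((a + 1) * ((b + 1) + (c + 1) + (e + 1)) + (d + 1) * (e + 1)) •
          castRaw (show b + c + e + 1 + a + d + 1 = a + b + c + d + e + 2 by omega)
            (l3 (l3 x2 x3 x5) x1 x4)
      - ((-1 : ℤ)) ^ ((a + 1) * ((b + 1) + (d + 1) + (e + 1)) + (c + 1) * ((d + 1) + (e + 1))) •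
          castRaw (show b + d + e + 1 + a + c + 1 = a + b + c + d + e + 2 by omega)
            (l3 (l3 x2 x4 x5) x1 x3)
      + ((-1 : ℤ)) ^ (((a + 1) + (b + 1)) * ((c + 1) + (d + 1) + (e + 1))) •
          castRaw (show c + d + e + 1 + a + b + 1 = a + b + c + d + e + 2 by omega)
            (l3 (l3 x3 x4 x5) x1 x2)
      = 0

end GradedStructures

section TwistHom

variable {A₁ A₂ : Type*} [AddCommGroup A₁] [Module ℂ A₁] [AddCommGroup A₂] [Module ℂ A₂]

/-- `e^Ĥ = Id + Ĥ` as a linear endomorphism of `A₁ ⊕ A₂`. -/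
def eHp (H : A₂ →ₗ[ℂ] A₁) : (A₁ × A₂) →ₗ[ℂ] (A₁ × A₂) :=
  LinearMap.id + (LinearMap.inl ℂ A₁ A₂).comp (H.comp (LinearMap.snd ℂ A₁ A₂))

/-- `e^{-Ĥ} = Id - Ĥ` as a linear endomorphism of `A₁ ⊕ A₂`. -/
def eHm (H : A₂ →ₗ[ℂ] A₁) : (A₁ × A₂) →ₗ[ℂ] (A₁ × A₂) :=
  LinearMap.id - (LinearMap.inl ℂ A₁ A₂).comp (H.comp (LinearMap.snd ℂ A₁ A₂))

end TwistHom

end LCAF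

/-!
Everything is pulled back along `T`, which commutes with `∂`. By the twisted Rota–Baxter
identity, `T` maps the bracket `[u_λ v] = u∘_λ v - v∘_{-λ-∂} u + u∨_λ v` of the new
multiplications to `[T u_λ T v]`. The first NS identity is then the module axiom for
`ρ(T a)`, `ρ(T b)` acting on `c`, once `ρ(T(b∘_{-λ-∂} a))_{λ+μ}` is recognised as
`ρ(T(b∘_μ a))_{λ+μ}` by sesquilinearity of `ρ`; the second is the cocycle identity of `φ`
at `(T a, T b, T c)`.
-/

namespace LCAF

section Monomials

variable {k k' : ℕ} {M : Type*} [AddCommGroup M]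

def monMulHom (α : Fin k →₀ ℕ) : MP k M →+ MP k M :=
  Finsupp.mapDomain.addMonoidHom (α + ·)

lemma monMulHom_apply (α : Fin k →₀ ℕ) (p : MP k M) : monMulHom α p = monMul α p := rfl

lemma monMul_single (α β : Fin k →₀ ℕ) (m : M) :
    monMul α (Finsupp.single β m) = Finsupp.single (α + β) m :=
  Finsupp.mapDomain_single

lemma monMul_monMul (α β : Fin k →₀ ℕ) (p : MP k M) :
    monMul α (monMul β p) = monMul (α + β) p := by
  unfold monMul
  rw [← Finsupp.mapDomain_comp]
  congr 1
  funext γ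
  simp [add_assoc]

lemma monMul_add (α : Fin k →₀ ℕ) (p p' : MP k M) :
    monMul α (p + p') = monMul α p + monMul α p' :=
  map_add (monMulHom α) p p'

lemma monMul_neg (α : Fin k →₀ ℕ) (p : MP k M) : monMul α (-p) = -monMul α p :=
  map_neg (monMulHom α) p

lemma monMul_zero (α : Fin k →₀ ℕ) : monMul α (0 : MP k M) = 0 :=
  Finsupp.mapDomain_zero

lemma monMul_zero_left (p : MP k M) : monMul 0 p = p := by
  simp only [monMul, zero_add]
  exact Finsupp.mapDomain_id

lemma monMul_iterate (α : Fin k →₀ ℕ) (n : ℕ) :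
    (monMul (M := M) α)^[n] = monMul (n • α) := by
  induction n with
  | zero => funext p; simp [monMul_zero_left]
  | succ n ih => funext p; rw [Function.iterate_succ_apply', ih, monMul_monMul, succ_nsmul']

def renameHom (h : Fin k → Fin k') : MP k M →+ MP k' M :=
  Finsupp.mapDomain.addMonoidHom (Finsupp.mapDomain h)

lemma renameHom_apply (h : Fin k → Fin k') (p : MP k M) : renameHom h p = renameV h p := rfl

lemma renameV_single (h : Fin k → Fin k') (α : Fin k →₀ ℕ) (m : M) :
    renameV h (Finsupp.single α m) = Finsupp.single (Finsupp.mapDomain h α) m :=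
  Finsupp.mapDomain_single

lemma renameV_monMul (h : Fin k → Fin k') (α : Fin k →₀ ℕ) (p : MP k M) :
    renameV h (monMul α p) = monMul (Finsupp.mapDomain h α) (renameV h p) := by
  unfold renameV monMul
  rw [← Finsupp.mapDomain_comp, ← Finsupp.mapDomain_comp]
  congr 1
  funext β
  simp [Finsupp.mapDomain_add]

end Monomials

section Coefficients

variable {k : ℕ} {M N : Type*} [AddCommGroup M] [Module ℂ M] [AddCommGroup N] [Module ℂ N]

def mapCoeffHom (g : M →ₗ[ℂ] N) : MP k M →+ MP k N :=
  Finsupp.mapRange.addMonoidHom g.toAddMonoidHom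

lemma mapCoeffHom_apply (g : M →ₗ[ℂ] N) (p : MP k M) : mapCoeffHom g p = mapCoeff g p := rfl

lemma mapCoeff_add (g : M →ₗ[ℂ] N) (p p' : MP k M) :
    mapCoeff g (p + p') = mapCoeff g p + mapCoeff g p' :=
  map_add (mapCoeffHom g) p p'

lemma mapCoeff_sub (g : M →ₗ[ℂ] N) (p p' : MP k M) :
    mapCoeff g (p - p') = mapCoeff g p - mapCoeff g p' :=
  map_sub (mapCoeffHom g) p p'

lemma mapCoeff_single (g : M →ₗ[ℂ] N) (β : Fin k →₀ ℕ) (m : M) :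
    mapCoeff g (Finsupp.single β m) = Finsupp.single β (g m) :=
  Finsupp.mapRange_single

lemma mapCoeff_smul (g : M →ₗ[ℂ] N) (r : ℂ) (p : MP k M) :
    mapCoeff g (r • p) = r • mapCoeff g p :=
  Finsupp.mapRange_smul r p (map_smul g r)

lemma mapCoeff_monMul (g : M →ₗ[ℂ] N) (α : Fin k →₀ ℕ) (p : MP k M) :
    mapCoeff g (monMul α p) = monMul α (mapCoeff g p) :=
  (Finsupp.mapDomain_mapRange _ p g (map_zero g) (map_add g)).symm

lemma renameV_mapCoeff {k' : ℕ} (h : Fin k → Fin k') (g : M →ₗ[ℂ] N) (p : MP k M) :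
    renameV h (mapCoeff g p) = mapCoeff g (renameV h p) :=
  Finsupp.mapDomain_mapRange _ p g (map_zero g) (map_add g)

lemma semiconj_mapCoeff_mapCoeff {g : M →ₗ[ℂ] N} {f : M →ₗ[ℂ] M} {f' : N →ₗ[ℂ] N}
    (h : ∀ m, g (f m) = f' (g m)) :
    Function.Semiconj (mapCoeff (k := k) g) (mapCoeff f) (mapCoeff f') := fun p => by
  ext β
  simp [mapCoeff, h]

lemma scaleP_add_left (q q' : MP k ℂ) (p : MP k M) :
    scaleP (q + q') p = scaleP q p + scaleP q' p :=
  Finsupp.sum_add_index' (fun _ => zero_smul _ _) (fun _ _ _ => add_smul _ _ _)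

lemma scaleP_add_right (q : MP k ℂ) (p p' : MP k M) :
    scaleP q (p + p') = scaleP q p + scaleP q p' := by
  simp only [scaleP, monMul_add, smul_add, Finsupp.sum_add]

lemma scaleP_single_left (α : Fin k →₀ ℕ) (r : ℂ) (p : MP k M) :
    scaleP (Finsupp.single α r) p = r • monMul α p :=
  Finsupp.sum_single_index (zero_smul ℂ _)

lemma scaleP_Xv (i : Fin k) (p : MP k M) : scaleP (Xv i) p = monMul (Finsupp.single i 1) p := by
  rw [Xv, scaleP_single_left, one_smul]

lemma scaleP_neg_Xv (i : Fin k) (p : MP k M) :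
    scaleP (-Xv i) p = -monMul (Finsupp.single i 1) p := by
  rw [Xv, ← Finsupp.single_neg, scaleP_single_left, neg_one_smul]

lemma mapCoeff_scaleP (g : M →ₗ[ℂ] N) (q : MP k ℂ) (p : MP k M) :
    mapCoeff g (scaleP q p) = scaleP q (mapCoeff g p) := by
  rw [scaleP, scaleP, ← mapCoeffHom_apply, map_finsuppSum]
  exact Finsupp.sum_congr fun α r => by
    rw [mapCoeffHom_apply, mapCoeff_smul, mapCoeff_monMul]

def opndHom (D : M →ₗ[ℂ] M) (q : MP k ℂ) (c : ℂ) : MP k M →+ MP k M :=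
  AddMonoidHom.mk' (opnd D q c) fun p p' => by
    simp only [opnd, scaleP_add_right, mapCoeff_add, smul_add]
    abel

lemma opndHom_apply (D : M →ₗ[ℂ] M) (q : MP k ℂ) (c : ℂ) (p : MP k M) :
    opndHom D q c p = opnd D q c p := rfl

lemma semiconj_mapCoeff_opnd {g : M →ₗ[ℂ] N} {DM : M →ₗ[ℂ] M} {DN : N →ₗ[ℂ] N}
    (h : ∀ m, g (DM m) = DN (g m)) (q : MP k ℂ) (c : ℂ) :
    Function.Semiconj (mapCoeff g) (opnd DM q c) (opnd DN q c) := fun p => by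
  rw [opnd, opnd, mapCoeff_add, mapCoeff_scaleP, mapCoeff_smul, semiconj_mapCoeff_mapCoeff h]

/-- The substitution `λ ↦ q + c∂` in a polynomial in one variable: `λⁿ m ↦ (q + c∂)ⁿ m`. -/
def substOne (D : M →ₗ[ℂ] M) (q : MP k ℂ) (c : ℂ) : MP 1 M →+ MP k M :=
  Finsupp.liftAddHom fun α =>
    ((show AddMonoid.End (MP k M) from opndHom D q c) ^ α 0).comp (Finsupp.singleAddHom 0)

lemma substOne_single (D : M →ₗ[ℂ] M) (q : MP k ℂ) (c : ℂ) (α : Fin 1 →₀ ℕ) (m : M) :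
    substOne D q c (Finsupp.single α m) = (opnd D q c)^[α 0] (Finsupp.single 0 m) := by
  rw [substOne, Finsupp.liftAddHom_apply_single]
  exact congrFun (AddMonoid.End.coe_pow _ (opndHom D q c) (α 0)) _

lemma substFun_eq_substOne (D : M →ₗ[ℂ] M) (q : Fin 1 → MP k ℂ) (c : Fin 1 → ℂ) (p : MP 1 M) :
    substFun D q c p = substOne D (q 0) (c 0) p := by
  rw [substOne, Finsupp.liftAddHom_apply, substFun]
  refine Finsupp.sum_congr fun α _ => ?_
  simp only [List.ofFn_succ, List.ofFn_zero, List.foldr_cons, List.foldr_nil]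
  rfl

lemma sub1_eq_substOne (D : M →ₗ[ℂ] M) (p : MP 1 M) : sub1 D p = substOne D (-Xv 0) (-1) p :=
  substFun_eq_substOne D _ _ p

lemma substOne_monMul_lam1 (D : M →ₗ[ℂ] M) (q : MP k ℂ) (c : ℂ) (p : MP 1 M) :
    substOne D q c (monMul lam1 p) = opnd D q c (substOne D q c p) := by
  have : (substOne D q c).comp (monMulHom lam1) = (opndHom D q c).comp (substOne D q c) :=
    Finsupp.addHom_ext fun α m => by
      simp only [AddMonoidHom.comp_apply, monMulHom_apply, monMul_single, substOne_single,
        opndHom_apply, lam1, Finsupp.add_apply, Finsupp.single_eq_same, add_comm 1,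
        Function.iterate_succ_apply']
  exact DFunLike.congr_fun this p

lemma mapCoeff_substOne {g : M →ₗ[ℂ] N} {DM : M →ₗ[ℂ] M} {DN : N →ₗ[ℂ] N}
    (h : ∀ m, g (DM m) = DN (g m)) (q : MP k ℂ) (c : ℂ) (p : MP 1 M) :
    mapCoeff g (substOne DM q c p) = substOne DN q c (mapCoeff g p) := by
  have : (mapCoeffHom g).comp (substOne DM q c) = (substOne DN q c).comp (mapCoeffHom g) :=
    Finsupp.addHom_ext fun α m => by
      simp only [AddMonoidHom.comp_apply, mapCoeffHom_apply, mapCoeff_single, substOne_single,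
        ((semiconj_mapCoeff_opnd h q c).iterate_right (α 0)).eq]
  exact DFunLike.congr_fun this p

lemma mapCoeff_sub1 {g : M →ₗ[ℂ] N} {DM : M →ₗ[ℂ] M} {DN : N →ₗ[ℂ] N}
    (h : ∀ m, g (DM m) = DN (g m)) (p : MP 1 M) :
    mapCoeff g (sub1 DM p) = sub1 DN (mapCoeff g p) := by
  rw [sub1_eq_substOne, sub1_eq_substOne, mapCoeff_substOne h]

end Coefficients

section Extension

variable {A B M N : Type*} [AddCommGroup M] [Module ℂ M] (DM : M →ₗ[ℂ] M) (q : MP 2 ℂ) (c : ℂ)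

section Left

variable [AddCommGroup A] [Module ℂ A]

lemma opL_eq_sum (F : A → B → MP 1 M) (p : MP 2 A) (w : B) :
    opL DM F q c p w = p.sum fun β x => monMul β (substOne DM q c (F x w)) :=
  Finsupp.sum_congr fun _ _ => by rw [opE, substFun_eq_substOne]

def opLHom (F : A → B → MP 1 M) (w : B) (hF : ∀ x y, F (x + y) w = F x w + F y w) :
    MP 2 A →+ MP 2 M :=
  Finsupp.liftAddHom fun β =>
    (monMulHom β).comp ((substOne DM q c).comp (AddMonoidHom.mk' (F · w) hF))

lemma opLHom_apply (F : A → B → MP 1 M) (w : B) (hF : ∀ x y, F (x + y) w = F x w + F y w)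
    (p : MP 2 A) : opLHom DM q c F w hF p = opL DM F q c p w :=
  (opL_eq_sum DM q c F p w).symm

lemma opL_single (F : A → B → MP 1 M) (w : B) (hF : ∀ x y, F (x + y) w = F x w + F y w)
    (β : Fin 2 →₀ ℕ) (x : A) :
    opL DM F q c (Finsupp.single β x) w = monMul β (substOne DM q c (F x w)) := by
  rw [← opLHom_apply DM q c F w hF, opLHom, Finsupp.liftAddHom_apply_single]
  rfl

lemma opL_monMul (F : A → B → MP 1 M) (w : B) (hF : ∀ x y, F (x + y) w = F x w + F y w)
    (γ : Fin 2 →₀ ℕ) (p : MP 2 A) :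
    opL DM F q c (monMul γ p) w = monMul γ (opL DM F q c p w) := by
  have : (opLHom DM q c F w hF).comp (monMulHom γ) = (monMulHom γ).comp (opLHom DM q c F w hF) :=
    Finsupp.addHom_ext fun β x => by
      simp only [AddMonoidHom.comp_apply, monMulHom_apply, opLHom_apply, monMul_single,
        opL_single DM q c F w hF, monMul_monMul]
  exact DFunLike.congr_fun this p

lemma opL_comp_left [AddCommGroup N] [Module ℂ N] (F : A → B → MP 1 M) (w : B) (h0 : F 0 w = 0)
    (g : N →ₗ[ℂ] A) (p : MP 2 N) :
    opL DM (fun u v => F (g u) v) q c p w = opL DM F q c (mapCoeff g p) w := by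
  rw [opL_eq_sum, opL_eq_sum, mapCoeff,
    Finsupp.sum_mapRange_index fun _ => by rw [h0, map_zero, monMul_zero]]

lemma opL_comp_right (F : A → B → MP 1 M) (g : N → B) (p : MP 2 A) (w : N) :
    opL DM (fun u v => F u (g v)) q c p w = opL DM F q c p (g w) :=
  rfl

end Left

section Right

variable [AddCommGroup B] [Module ℂ B]

lemma opR_eq_sum (F : A → B → MP 1 M) (a : A) (p : MP 2 B) :
    opR DM F q c a p = p.sum fun β x => monMul β (substOne DM q c (F a x)) :=
  Finsupp.sum_congr fun _ _ => by rw [opE, substFun_eq_substOne]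

lemma opR_comp_left (F : A → B → MP 1 M) (g : N → A) (a : N) (p : MP 2 B) :
    opR DM (fun u v => F (g u) v) q c a p = opR DM F q c (g a) p :=
  rfl

lemma opR_comp_right [AddCommGroup N] [Module ℂ N] (F : A → B → MP 1 M) (a : A) (h0 : F a 0 = 0)
    (g : N →ₗ[ℂ] B) (p : MP 2 N) :
    opR DM (fun u v => F u (g v)) q c a p = opR DM F q c a (mapCoeff g p) := by
  rw [opR_eq_sum, opR_eq_sum, mapCoeff,
    Finsupp.sum_mapRange_index fun _ => by rw [h0, map_zero, monMul_zero]]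

end Right

end Extension

section Shift

variable {A B M : Type*} [AddCommGroup A] [Module ℂ A]

lemma map_sub1_eq [AddCommGroup M] (D : A →ₗ[ℂ] A) (f g : MP 1 A →+ MP 2 M)
    (hlam : ∀ p, f (monMul lam1 p) = monMul (Finsupp.single 0 1) (f p))
    (hD : ∀ p, f (mapCoeff D p) =
      -(monMul (Finsupp.single 0 1) (f p) + monMul (Finsupp.single 1 1) (f p)))
    (hg : ∀ α x, g (Finsupp.single α x) =
      monMul (Finsupp.single 1 (α 0)) (f (Finsupp.single 0 x)))
    (p : MP 1 A) : f (sub1 D p) = g p := by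
  have hstep : Function.Semiconj f (opnd D (-Xv 0) (-1)) (monMul (Finsupp.single 1 1)) :=
    fun p => by
      unfold lam1 at hlam
      rw [opnd, scaleP_neg_Xv, neg_one_smul, map_add, map_neg, map_neg, hD, hlam]
      abel
  have : f.comp (substOne D (-Xv 0) (-1)) = g :=
    Finsupp.addHom_ext fun α x => by
      rw [AddMonoidHom.comp_apply, substOne_single, (hstep.iterate_right (α 0)).eq,
        monMul_iterate, hg, Finsupp.smul_single, smul_eq_mul, mul_one]
  rw [sub1_eq_substOne]
  exact DFunLike.congr_fun this p

variable [AddCommGroup M] [Module ℂ M] (DM : M →ₗ[ℂ] M) (F : A → B → MP 1 M) (w : B)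
  {D : A →ₗ[ℂ] A}

lemma opL_mapCoeff_of_sesq (hF : ∀ x y, F (x + y) w = F x w + F y w)
    (hD : ∀ x, F (D x) w = -(monMul lam1 (F x w))) (p : MP 2 A) :
    opL DM F (Xv 0 + Xv 1) 0 (mapCoeff D p) w =
      -(monMul (Finsupp.single 0 1) (opL DM F (Xv 0 + Xv 1) 0 p w) +
        monMul (Finsupp.single 1 1) (opL DM F (Xv 0 + Xv 1) 0 p w)) := by
  set L := opLHom DM (Xv 0 + Xv 1) 0 F w hF
  have : L.comp (mapCoeffHom D) =
      -((monMulHom (Finsupp.single 0 1)).comp L + (monMulHom (Finsupp.single 1 1)).comp L) :=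
    Finsupp.addHom_ext fun β x => by
      simp only [AddMonoidHom.comp_apply, AddMonoidHom.neg_apply, AddMonoidHom.add_apply,
        mapCoeffHom_apply, monMulHom_apply, L, opLHom_apply, mapCoeff_single,
        opL_single DM _ _ F w hF, hD, map_neg, substOne_monMul_lam1, opnd, zero_smul, add_zero,
        scaleP_add_left, scaleP_Xv, monMul_neg, monMul_add, monMul_monMul, add_comm β]
  exact DFunLike.congr_fun this p

/-- In `ρ(x)_{λ+μ} w` sesquilinearity turns `∂` into `-λ-μ`, so substituting `λ ↦ -λ-∂`
in `x` amounts to renaming `λ` to `μ`. -/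
lemma opL_rename_sub1 (hF : ∀ x y, F (x + y) w = F x w + F y w)
    (hD : ∀ x, F (D x) w = -(monMul lam1 (F x w))) (p : MP 1 A) :
    opL DM F (Xv 0 + Xv 1) 0 (renameV (fun _ => 0) (sub1 D p)) w =
      opL DM F (Xv 0 + Xv 1) 0 (renameV (fun _ => 1) p) w := by
  set L := opLHom DM (Xv 0 + Xv 1) 0 F w hF
  refine map_sub1_eq D (L.comp (renameHom fun _ => 0)) (L.comp (renameHom fun _ => 1))
    (fun p => ?_) (fun p => ?_) (fun α x => ?_) p
  · simp only [AddMonoidHom.comp_apply, renameHom_apply, L, opLHom_apply, renameV_monMul, lam1,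
      Finsupp.mapDomain_single, opL_monMul DM _ _ F w hF]
  · simp only [AddMonoidHom.comp_apply, renameHom_apply, L, opLHom_apply, renameV_mapCoeff,
      opL_mapCoeff_of_sesq DM F w hF hD]
  · have hα : Finsupp.mapDomain (fun _ : Fin 1 => (1 : Fin 2)) α = Finsupp.single 1 (α 0) := by
      conv_lhs => rw [Finsupp.unique_single α, Finsupp.mapDomain_single]
      rfl
    simp only [AddMonoidHom.comp_apply, renameHom_apply, L, opLHom_apply, renameV_single, hα,
      Finsupp.mapDomain_zero, opL_single DM _ _ F w hF, monMul_zero_left]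

end Shift

section NSIdentities

variable {A M : Type*} [AddCommGroup A] [Module ℂ A] [AddCommGroup M] [Module ℂ M]
  {D : A →ₗ[ℂ] A} {br : A → A → MP 1 A} {DM : M →ₗ[ℂ] M} {rho : A → M → MP 1 M}
  {phi : A → A → MP 1 M} {T : M →ₗ[ℂ] A}

lemma IsTwistedRB.mapCoeff_lieNS (hRB : IsTwistedRB br DM rho phi T) (m n : M) :
    mapCoeff T (lieNS DM (fun u v => rho (T u) v) (fun u v => phi (T u) (T v)) m n) =
      br (T m) (T n) :=
  (hRB m n).symm

lemma IsTwistedRB.br_eq (hRB : IsTwistedRB br DM rho phi T) (hT : ∀ m, T (DM m) = D (T m))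
    (m n : M) :
    br (T m) (T n) = mapCoeff T (rho (T m) n) - sub1 D (mapCoeff T (rho (T n) m)) +
      mapCoeff T (phi (T m) (T n)) := by
  rw [hRB, mapCoeff_add, mapCoeff_sub, mapCoeff_sub1 hT]

lemma ns1_of_isTwistedRB (hM : IsLCAMod D br DM rho) (hT : ∀ m, T (DM m) = D (T m))
    (hRB : IsTwistedRB br DM rho phi T) (a b c : M) :
    opL DM (fun u v => rho (T u) v) (Xv 0 + Xv 1) 0
        (renameV (fun _ => (0 : Fin 2)) (rho (T a) b)) c
      - opR DM (fun u v => rho (T u) v) (Xv 0) 0 a (renameV (fun _ => (1 : Fin 2)) (rho (T b) c))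
      - opL DM (fun u v => rho (T u) v) (Xv 0 + Xv 1) 0
        (renameV (fun _ => (1 : Fin 2)) (rho (T b) a)) c
      + opR DM (fun u v => rho (T u) v) (Xv 1) 0 b (renameV (fun _ => (0 : Fin 2)) (rho (T a) c))
      + opL DM (fun u v => rho (T u) v) (Xv 0 + Xv 1) 0
        (renameV (fun _ => (0 : Fin 2)) (phi (T a) (T b))) c = 0 := by
  have hadd : ∀ x y, rho (x + y) c = rho x c + rho y c := fun x y => hM.add_left x y c
  have h0 : rho 0 c = 0 := by simpa using hM.smul_left 0 0 c
  have hbr : opL DM rho (Xv 0 + Xv 1) 0 (renameV (fun _ => (0 : Fin 2)) (br (T a) (T b))) c =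
      opL DM rho (Xv 0 + Xv 1) 0 (renameV (fun _ => 0) (mapCoeff T (rho (T a) b))) c
        - opL DM rho (Xv 0 + Xv 1) 0 (renameV (fun _ => 1) (mapCoeff T (rho (T b) a))) c
        + opL DM rho (Xv 0 + Xv 1) 0 (renameV (fun _ => 0) (mapCoeff T (phi (T a) (T b)))) c := by
    rw [hRB.br_eq hT, ← opL_rename_sub1 DM rho c hadd (fun x => hM.d_left x c)]
    simp only [← renameHom_apply, ← opLHom_apply DM _ _ rho c hadd, map_add, map_sub]
  have key := (hM.comm (T a) (T b) c).trans hbr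
  simp only [opL_comp_left DM _ _ rho c h0 T, opR_comp_left DM _ _ rho T,
    renameV_mapCoeff] at key ⊢
  linear_combination (norm := abel) -key

lemma ns2_of_isTwistedRB (hphi : IsTwoCocycle D br DM rho phi)
    (hRB : IsTwistedRB br DM rho phi T) (a b c : M) :
    opR DM (fun u v => phi (T u) (T v)) (Xv 0) 0 a
        (renameV (fun _ => (1 : Fin 2))
          (lieNS DM (fun u v => rho (T u) v) (fun u v => phi (T u) (T v)) b c))
      - opL DM (fun u v => phi (T u) (T v)) (Xv 0 + Xv 1) 0
        (renameV (fun _ => (0 : Fin 2))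
          (lieNS DM (fun u v => rho (T u) v) (fun u v => phi (T u) (T v)) a b)) c
      - opR DM (fun u v => phi (T u) (T v)) (Xv 1) 0 b
        (renameV (fun _ => (0 : Fin 2))
          (lieNS DM (fun u v => rho (T u) v) (fun u v => phi (T u) (T v)) a c))
      + opR DM (fun u v => rho (T u) v) (Xv 0) 0 a
        (renameV (fun _ => (1 : Fin 2)) (phi (T b) (T c)))
      - opR DM (fun u v => rho (T u) v) (Xv 1) 0 b
        (renameV (fun _ => (0 : Fin 2)) (phi (T a) (T c)))
      + opR DM (fun u v => rho (T u) v) (-(Xv 0) - Xv 1) (-1) c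
        (renameV (fun _ => (0 : Fin 2)) (phi (T a) (T b))) = 0 := by
  have hr : ∀ x, phi x 0 = 0 := fun x => by simpa using hphi.smul_right 0 x 0
  have hl : ∀ y, phi 0 y = 0 := fun y => by simpa using hphi.smul_left 0 0 y
  simp only [opR_comp_left DM _ _ (fun u v => phi u (T v)) T, opR_comp_left DM _ _ rho T,
    opR_comp_right DM _ _ phi _ (hr _) T,
    opL_comp_left DM _ _ (fun u v => phi u (T v)) c (hl _) T, opL_comp_right DM _ _ phi T,
    ← renameV_mapCoeff, hRB.mapCoeff_lieNS]
  linear_combination (norm := abel) hphi.cocycle (T a) (T b) (T c)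

end NSIdentities

theorem statement17_general {A M : Type*} [AddCommGroup A] [Module ℂ A]
    [AddCommGroup M] [Module ℂ M]
    (D : A →ₗ[ℂ] A) (br : A → A → MP 1 A)
    (DM : M →ₗ[ℂ] M) (rho : A → M → MP 1 M) (hM : IsLCAMod D br DM rho)
    (phi : A → A → MP 1 M) (hphi : IsTwoCocycle D br DM rho phi)
    (T : M →ₗ[ℂ] A) (hT : ∀ m : M, T (DM m) = D (T m))
    (hRB : IsTwistedRB br DM rho phi T) :
    IsNSLie DM (fun u v => rho (T u) v) (fun u v => phi (T u) (T v)) :=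
  { o_add_left := fun a b c => by simpa only [map_add] using hM.add_left (T a) (T b) c
    o_smul_left := fun r a b => by simpa only [map_smul] using hM.smul_left r (T a) b
    o_add_right := fun a => hM.add_right (T a)
    o_smul_right := fun r a => hM.smul_right r (T a)
    o_sesq_left := fun a b => by simpa only [hT] using hM.d_left (T a) b
    o_sesq_right := fun a => hM.d_right (T a)
    v_add_left := fun a b c => by simpa only [map_add] using hphi.add_left (T a) (T b) (T c)
    v_smul_left := fun r a b => by simpa only [map_smul] using hphi.smul_left r (T a) (T b)
    v_add_right := fun a b c => by simpa only [map_add] using hphi.add_right (T a) (T b) (T c)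
    v_smul_right := fun r a b => by simpa only [map_smul] using hphi.smul_right r (T a) (T b)
    v_sesq_left := fun a b => by simpa only [hT] using hphi.sesq_left (T a) (T b)
    v_sesq_right := fun a b => by simpa only [hT] using hphi.sesq_right (T a) (T b)
    v_skew := fun a b => hphi.skew (T a) (T b)
    ns1 := ns1_of_isTwistedRB hM hT hRB
    ns2 := ns2_of_isTwistedRB hphi hRB }

/-- A `φ`-twisted relative Rota–Baxter operator `T : M → A`
makes `M` an NS-Lie conformal algebra with `u∘_λ v = ρ(T u)_λ v` and
`u∨_λ v = φ_λ(T u, T v)`. -/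
theorem statement17 {A M : Type*} [AddCommGroup A] [Module ℂ A]
    [AddCommGroup M] [Module ℂ M]
    (D : A →ₗ[ℂ] A) (br : A → A → MP 1 A) (hL : IsLCA D br)
    (DM : M →ₗ[ℂ] M) (rho : A → M → MP 1 M) (hM : IsLCAMod D br DM rho)
    (phi : A → A → MP 1 M) (hphi : IsTwoCocycle D br DM rho phi)
    (T : M →ₗ[ℂ] A) (hT : ∀ m : M, T (DM m) = D (T m))
    (hRB : IsTwistedRB br DM rho phi T) :
    IsNSLie DM (fun u v => rho (T u) v) (fun u v => phi (T u) (T v)) :=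
  statement17_general D br DM rho hM phi hphi T hT hRB

end LCAF
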